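/- arXiv:2310.19805 — 2 statements merged into one kernel-verified Lean document; each statement's English description precedes it below -/
import Mathlib

section
/- (Softmax policy improvement step) Let π_old be a policy and Q_old a fixed point of the soft Bellman operator T^{π_old}. Define π_new(s)(a) = exp(Q_old(s,a)) / ∑_{a'} exp(Q_old(s,a')). Then π_new is a policy, and the fixed point Q_new of T^{π_new} satisfies Q_new(s,a) ≥ Q_old(s,a) for all (s,a). -/
/-!
The soft value `∑ₐ (π a · x a + negMulLog (π a))` of a distribution `π` is at most
`log ∑ₐ exp (x a)`, with equality at `π = softmax x` (Gibbs' variational principle). Hence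
`Q_old = T^{π_old} Q_old ≤ T^{π_new} Q_old`. On the other hand `T^{π_new}` shifts differences
by a `γ`-weighted average, so at a maximiser of `Q_old - Q_new` this difference is at most
`γ` times itself, hence nonpositive.
-/

open Real Finset Filter

variable {S A : Type*}

/-- The soft Bellman operator `T^pol` of `(r, p, γ, pol)`. -/
noncomputable def softBellman [Fintype S] [Fintype A]
    (r : S × A → ℝ) (p : S × A → S → ℝ) (γ : ℝ) (pol : S → A → ℝ)
    (Q : S × A → ℝ) : S × A → ℝ :=
  fun sa => r sa + γ * ∑ s' : S, p sa s' *
    ∑ a' : A, (pol s' a' * Q (s', a') + Real.negMulLog (pol s' a'))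

theorem Real.mul_log_add_negMulLog_le {q y : ℝ} (hq : 0 ≤ q) (hy : 0 < y) :
    q * log y + negMulLog q ≤ y - q := by
  rcases hq.eq_or_lt with rfl | hq
  · simpa using hy.le
  -- `q log (y / q) ≤ q (y / q - 1)`
  have key := mul_le_mul_of_nonneg_left (log_le_sub_one_of_pos (div_pos hy hq)) hq.le
  rw [log_div hy.ne' hq.ne', mul_sub_one, mul_div_cancel₀ _ hq.ne'] at key
  rw [negMulLog]
  linarith

section Softmax

variable [Fintype A]

noncomputable def softmax (x : A → ℝ) (a : A) : ℝ :=
  exp (x a) / ∑ a', exp (x a')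

variable [Nonempty A]

theorem sum_exp_pos (x : A → ℝ) : 0 < ∑ a, exp (x a) :=
  sum_pos (fun a _ => exp_pos (x a)) univ_nonempty

theorem softmax_pos (x : A → ℝ) (a : A) : 0 < softmax x a :=
  div_pos (exp_pos _) (sum_exp_pos x)

theorem sum_softmax (x : A → ℝ) : ∑ a, softmax x a = 1 := by
  unfold softmax
  rw [← sum_div, div_self (sum_exp_pos x).ne']

theorem log_softmax (x : A → ℝ) (a : A) :
    log (softmax x a) = x a - log (∑ a', exp (x a')) := by
  unfold softmax
  rw [log_div (exp_ne_zero _) (sum_exp_pos x).ne', log_exp]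

theorem sum_mul_add_negMulLog_softmax (x : A → ℝ) :
    ∑ a, (softmax x a * x a + negMulLog (softmax x a)) = log (∑ a, exp (x a)) := by
  calc ∑ a, (softmax x a * x a + negMulLog (softmax x a))
      = ∑ a, softmax x a * log (∑ a, exp (x a)) :=
        sum_congr rfl fun a _ => by rw [negMulLog, log_softmax]; ring
    _ = log (∑ a, exp (x a)) := by rw [← sum_mul, sum_softmax, one_mul]

theorem sum_mul_add_negMulLog_le_log_sum_exp {q : A → ℝ} (hq0 : ∀ a, 0 ≤ q a)
    (hq1 : ∑ a, q a = 1) (x : A → ℝ) :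
    ∑ a, (q a * x a + negMulLog (q a)) ≤ log (∑ a, exp (x a)) := by
  have key : ∀ a, q a * log (softmax x a) + negMulLog (q a) ≤ softmax x a - q a :=
    fun a => Real.mul_log_add_negMulLog_le (hq0 a) (softmax_pos x a)
  have total := sum_le_sum fun a (_ : a ∈ univ) => key a
  simp_rw [log_softmax, mul_sub, sum_add_distrib, sum_sub_distrib, ← sum_mul, hq1,
    sum_softmax] at total
  rw [sum_add_distrib]
  linarith

end Softmax

theorem sum_mul_le_of_le {ι : Type*} [Fintype ι] {w f : ι → ℝ} {c : ℝ} (hw0 : ∀ i, 0 ≤ w i)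
    (hw1 : ∑ i, w i = 1) (hf : ∀ i, f i ≤ c) : ∑ i, w i * f i ≤ c :=
  calc ∑ i, w i * f i ≤ ∑ i, w i * c :=
      sum_le_sum fun i _ => mul_le_mul_of_nonneg_left (hf i) (hw0 i)
    _ = c := by rw [← sum_mul, hw1, one_mul]

section SoftBellman

variable [Fintype A]

noncomputable def softValue (pol : S → A → ℝ) (Q : S × A → ℝ) (s : S) : ℝ :=
  ∑ a, (pol s a * Q (s, a) + negMulLog (pol s a))

theorem softValue_le_softValue_softmax [Nonempty A] {pol : S → A → ℝ}
    (hpol0 : ∀ s a, 0 ≤ pol s a) (hpol1 : ∀ s, ∑ a, pol s a = 1) (Q : S × A → ℝ) (s : S) :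
    softValue pol Q s ≤ softValue (fun s => softmax fun a => Q (s, a)) Q s :=
  (sum_mul_add_negMulLog_le_log_sum_exp (hpol0 s) (hpol1 s) _).trans_eq
    (sum_mul_add_negMulLog_softmax _).symm

variable [Fintype S]

theorem softBellman_eq (r : S × A → ℝ) (p : S × A → S → ℝ) (γ : ℝ) (pol : S → A → ℝ)
    (Q : S × A → ℝ) (sa : S × A) :
    softBellman r p γ pol Q sa = r sa + γ * ∑ s', p sa s' * softValue pol Q s' :=
  rfl

variable {r : S × A → ℝ} {p : S × A → S → ℝ} {γ : ℝ}

theorem softBellman_le_softBellman (hγ0 : 0 ≤ γ) (hp0 : ∀ sa s', 0 ≤ p sa s')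
    {pol pol' : S → A → ℝ} {Q Q' : S × A → ℝ}
    (h : ∀ s, softValue pol Q s ≤ softValue pol' Q' s) (sa : S × A) :
    softBellman r p γ pol Q sa ≤ softBellman r p γ pol' Q' sa := by
  simp only [softBellman_eq]
  gcongr with s' _
  exacts [hp0 sa s', h s']

theorem softBellman_sub_softBellman (pol : S → A → ℝ) (Q Q' : S × A → ℝ) (sa : S × A) :
    softBellman r p γ pol Q sa - softBellman r p γ pol Q' sa =
      γ * ∑ s', p sa s' * ∑ a, pol s' a * (Q (s', a) - Q' (s', a)) := by
  rw [softBellman_eq, softBellman_eq, add_sub_add_left_eq_sub, ← mul_sub, ← sum_sub_distrib]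
  congr 1
  refine sum_congr rfl fun s' _ => ?_
  rw [← mul_sub, softValue, softValue, ← sum_sub_distrib]
  congr 1
  exact sum_congr rfl fun a _ => by ring

theorem softBellman_sub_softBellman_le (hγ0 : 0 ≤ γ) (hp0 : ∀ sa s', 0 ≤ p sa s')
    (hp1 : ∀ sa, ∑ s', p sa s' = 1) {pol : S → A → ℝ} (hpol0 : ∀ s a, 0 ≤ pol s a)
    (hpol1 : ∀ s, ∑ a, pol s a = 1) {Q Q' : S × A → ℝ} {M : ℝ}
    (hM : ∀ sa, Q sa - Q' sa ≤ M) (sa : S × A) :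
    softBellman r p γ pol Q sa - softBellman r p γ pol Q' sa ≤ γ * M := by
  rw [softBellman_sub_softBellman]
  gcongr
  exact sum_mul_le_of_le (hp0 sa) (hp1 sa) fun s' =>
    sum_mul_le_of_le (hpol0 s') (hpol1 s') fun a => hM (s', a)

theorem le_of_le_softBellman_of_softBellman_eq (hγ0 : 0 ≤ γ) (hγ1 : γ < 1)
    (hp0 : ∀ sa s', 0 ≤ p sa s') (hp1 : ∀ sa, ∑ s', p sa s' = 1) {pol : S → A → ℝ}
    (hpol0 : ∀ s a, 0 ≤ pol s a) (hpol1 : ∀ s, ∑ a, pol s a = 1) {Q Q' : S × A → ℝ}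
    (hQ : ∀ sa, Q sa ≤ softBellman r p γ pol Q sa) (hQ' : softBellman r p γ pol Q' = Q')
    (sa : S × A) : Q sa ≤ Q' sa := by
  have : Nonempty (S × A) := ⟨sa⟩
  obtain ⟨sa₀, hmax⟩ := Finite.exists_max fun x => Q x - Q' x
  have hcontract : Q sa₀ - Q' sa₀ ≤ γ * (Q sa₀ - Q' sa₀) := by
    have := softBellman_sub_softBellman_le (r := r) hγ0 hp0 hp1 hpol0 hpol1 hmax sa₀
    rw [hQ'] at this
    linarith [hQ sa₀]
  have hmax_nonpos : Q sa₀ - Q' sa₀ ≤ 0 := by nlinarith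
  linarith [hmax sa]

end SoftBellman

theorem softmax_policy_improvement_general
    [Fintype S] [Fintype A] [Nonempty A]
    (p : S × A → S → ℝ) (hp0 : ∀ sa s', 0 ≤ p sa s') (hp1 : ∀ sa, ∑ s' : S, p sa s' = 1)
    (r : S × A → ℝ) (γ : ℝ) (hγ0 : 0 ≤ γ) (hγ1 : γ < 1)
    (polOld : S → A → ℝ) (hpolOld0 : ∀ s a, 0 ≤ polOld s a) (hpolOld1 : ∀ s, ∑ a : A, polOld s a = 1)
    (Qold : S × A → ℝ) (hQold : softBellman r p γ polOld Qold = Qold)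
    (polNew : S → A → ℝ)
    (hpolNew : ∀ s a, polNew s a = Real.exp (Qold (s, a)) / ∑ a' : A, Real.exp (Qold (s, a'))) :
    (∀ s a, 0 ≤ polNew s a) ∧ (∀ s, ∑ a : A, polNew s a = 1) ∧
    ∀ Qnew : S × A → ℝ, softBellman r p γ polNew Qnew = Qnew →
      ∀ sa, Qold sa ≤ Qnew sa := by
  obtain rfl : polNew = fun s => softmax fun a => Qold (s, a) := funext₂ hpolNew
  have hpolNew0 : ∀ s a, 0 ≤ softmax (fun a => Qold (s, a)) a := fun s a => (softmax_pos _ a).le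
  have hpolNew1 : ∀ s, ∑ a, softmax (fun a => Qold (s, a)) a = 1 := fun s => sum_softmax _
  refine ⟨hpolNew0, hpolNew1, fun Qnew hQnew =>
    le_of_le_softBellman_of_softBellman_eq hγ0 hγ1 hp0 hp1 hpolNew0 hpolNew1 (fun sa => ?_) hQnew⟩
  exact (congrFun hQold sa).ge.trans <| softBellman_le_softBellman hγ0 hp0
    (softValue_le_softValue_softmax hpolOld0 hpolOld1 Qold) sa

/-- Softmax policy improvement step: the softmax of the soft Q-function of `pol_old`
is a policy, and its soft Q-function dominates that of `pol_old`. -/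
theorem softmax_policy_improvement
    [Fintype S] [Fintype A] [Nonempty S] [Nonempty A]
    (p : S × A → S → ℝ) (hp0 : ∀ sa s', 0 ≤ p sa s') (hp1 : ∀ sa, ∑ s' : S, p sa s' = 1)
    (r : S × A → ℝ) (γ : ℝ) (hγ0 : 0 ≤ γ) (hγ1 : γ < 1)
    (polOld : S → A → ℝ) (hpolOld0 : ∀ s a, 0 ≤ polOld s a) (hpolOld1 : ∀ s, ∑ a : A, polOld s a = 1)
    (Qold : S × A → ℝ) (hQold : softBellman r p γ polOld Qold = Qold)
    (polNew : S → A → ℝ)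
    (hpolNew : ∀ s a, polNew s a = Real.exp (Qold (s, a)) / ∑ a' : A, Real.exp (Qold (s, a'))) :
    (∀ s a, 0 ≤ polNew s a) ∧ (∀ s, ∑ a : A, polNew s a = 1) ∧
    ∀ Qnew : S × A → ℝ, softBellman r p γ polNew Qnew = Qnew →
      ∀ sa, Qold sa ≤ Qnew sa :=
  softmax_policy_improvement_general p hp0 hp1 r γ hγ0 hγ1 polOld hpolOld0 hpolOld1 Qold hQold
    polNew hpolNew
end

section
/- (The soft optimality operator is a γ-contraction) For all Q₁, Q₂ : S × A → ℝ, max over (s,a) of |(T* Q₁)(s,a) − (T* Q₂)(s,a)| ≤ γ · max over (s,a) of |Q₁(s,a) − Q₂(s,a)|. -/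
/-!
Log-sum-exp is 1-Lipschitz for the sup norm, since raising every argument by at most
`c` multiplies `∑ exp` by at most `exp c`. The soft Bellman backup averages these log-sum-exp
values against the probability vector `p (s, a)`, which cannot increase the deviation, and then
scales the result by `γ`.
-/

open Real Finset Filter

variable {S A : Type*}

/-- The soft optimality operator `T*` of `(r, p, γ)`. -/
noncomputable def softOpt [Fintype S] [Fintype A]
    (r : S × A → ℝ) (p : S × A → S → ℝ) (γ : ℝ)
    (Q : S × A → ℝ) : S × A → ℝ :=
  fun sa => r sa + γ * ∑ s' : S, p sa s' *
    Real.log (∑ a' : A, Real.exp (Q (s', a')))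

lemma Real.log_sum_exp_le_add {ι : Type*} [Fintype ι] [Nonempty ι] {f g : ι → ℝ} {c : ℝ}
    (h : ∀ i, f i ≤ g i + c) :
    log (∑ i, exp (f i)) ≤ log (∑ i, exp (g i)) + c := by
  have hpos : 0 < ∑ i, exp (g i) := Finset.sum_pos (fun i _ => exp_pos _) univ_nonempty
  have hsum : ∑ i, exp (f i) ≤ (∑ i, exp (g i)) * exp c := by
    rw [Finset.sum_mul]
    exact Finset.sum_le_sum fun i _ => by rw [← exp_add]; exact exp_le_exp.mpr (h i)
  calc log (∑ i, exp (f i)) ≤ log ((∑ i, exp (g i)) * exp c) := log_le_log (by positivity) hsum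
    _ = log (∑ i, exp (g i)) + c := by rw [log_mul hpos.ne' (exp_pos c).ne', log_exp]

lemma Real.abs_log_sum_exp_sub_le {ι : Type*} [Fintype ι] [Nonempty ι] {f g : ι → ℝ} {c : ℝ}
    (h : ∀ i, |f i - g i| ≤ c) :
    |log (∑ i, exp (f i)) - log (∑ i, exp (g i))| ≤ c := by
  have one_side : ∀ {u v : ι → ℝ}, (∀ i, |u i - v i| ≤ c) →
      log (∑ i, exp (u i)) - log (∑ i, exp (v i)) ≤ c := fun huv =>
    sub_le_iff_le_add'.mpr <| log_sum_exp_le_add fun i => sub_le_iff_le_add'.mp (le_of_abs_le (huv i))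
  exact abs_sub_le_iff.mpr ⟨one_side h, one_side fun i => abs_sub_comm (f i) (g i) ▸ h i⟩

lemma Finset.abs_sum_mul_le_of_abs_le {ι : Type*} (s : Finset ι) {w x : ι → ℝ} {c : ℝ}
    (hw₀ : ∀ i ∈ s, 0 ≤ w i) (hw₁ : ∑ i ∈ s, w i = 1) (hx : ∀ i ∈ s, |x i| ≤ c) :
    |∑ i ∈ s, w i * x i| ≤ c :=
  calc |∑ i ∈ s, w i * x i| ≤ ∑ i ∈ s, |w i * x i| := abs_sum_le_sum_abs _ _
    _ ≤ ∑ i ∈ s, w i * c := Finset.sum_le_sum fun i hi => by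
        rw [abs_mul, abs_of_nonneg (hw₀ i hi)]
        exact mul_le_mul_of_nonneg_left (hx i hi) (hw₀ i hi)
    _ = c := by rw [← Finset.sum_mul, hw₁, one_mul]

lemma softOpt_sub [Fintype S] [Fintype A] (r : S × A → ℝ) (p : S × A → S → ℝ) (γ : ℝ)
    (Q₁ Q₂ : S × A → ℝ) (sa : S × A) :
    softOpt r p γ Q₁ sa - softOpt r p γ Q₂ sa =
      γ * ∑ s', p sa s' *
        (log (∑ a', exp (Q₁ (s', a'))) - log (∑ a', exp (Q₂ (s', a')))) := by
  simp only [softOpt, mul_sub, Finset.sum_sub_distrib]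
  ring

theorem softOpt_contraction_general
    [Fintype S] [Fintype A] [Nonempty A]
    (p : S × A → S → ℝ) (hp0 : ∀ sa s', 0 ≤ p sa s') (hp1 : ∀ sa, ∑ s' : S, p sa s' = 1)
    (r : S × A → ℝ) (γ : ℝ) (hγ0 : 0 ≤ γ)
    (Q₁ Q₂ : S × A → ℝ) :
    (⨆ sa : S × A, |softOpt r p γ Q₁ sa - softOpt r p γ Q₂ sa|) ≤
      γ * ⨆ sa : S × A, |Q₁ sa - Q₂ sa| := by
  set M := ⨆ sa : S × A, |Q₁ sa - Q₂ sa|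
  have hQ : ∀ sa, |Q₁ sa - Q₂ sa| ≤ M := le_ciSup (Set.finite_range _).bddAbove
  have hM : 0 ≤ M := Real.iSup_nonneg fun _ => abs_nonneg _
  refine Real.iSup_le (fun sa => ?_) (mul_nonneg hγ0 hM)
  rw [softOpt_sub, abs_mul, abs_of_nonneg hγ0]
  gcongr
  exact Finset.abs_sum_mul_le_of_abs_le _ (fun s' _ => hp0 sa s') (hp1 sa)
    fun s' _ => abs_log_sum_exp_sub_le fun a' => hQ (s', a')

/-- The soft optimality operator is a γ-contraction in the supremum norm. -/
theorem softOpt_contraction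
    [Fintype S] [Fintype A] [Nonempty S] [Nonempty A]
    (p : S × A → S → ℝ) (hp0 : ∀ sa s', 0 ≤ p sa s') (hp1 : ∀ sa, ∑ s' : S, p sa s' = 1)
    (r : S × A → ℝ) (γ : ℝ) (hγ0 : 0 ≤ γ) (hγ1 : γ < 1)
    (Q₁ Q₂ : S × A → ℝ) :
    (⨆ sa : S × A, |softOpt r p γ Q₁ sa - softOpt r p γ Q₂ sa|) ≤
      γ * ⨆ sa : S × A, |Q₁ sa - Q₂ sa| :=
  softOpt_contraction_general p hp0 hp1 r γ hγ0 Q₁ Q₂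
end
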